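/- Let λ = (λ₁,...,λ_d) ∈ 𝕋^d where 𝕋 = {z ∈ ℂ : |z| = 1}. Define 𝕋_λ = {z ∈ 𝕋^d : z₁^{v₁}···z_d^{v_d} = 1 for all v ∈ ℤ^d with λ₁^{v₁}···λ_d^{v_d} = 1}, and let s : 𝕋_λ → 𝕋_λ be the map (z₁,...,z_d) ↦ (z₁λ₁,...,z_dλ_d). Then for every z ∈ 𝕋_λ, the orbit {sⁿ(z) : n ∈ ℕ} is dense in 𝕋_λ. -/

import Mathlib

/-- The set of points of the `d`-torus satisfying all multiplicative relations of `l`. -/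
def Tset (d : ℕ) (l : Fin d → ℂ) : Set (Fin d → ℂ) :=
  {z | (∀ i, ‖z i‖ = 1) ∧
    ∀ v : Fin d → ℤ, (∏ i, l i ^ v i) = 1 → (∏ i, z i ^ v i) = 1}

/-!
Pass to the additive torus `ℝᵈ / ℤᵈ` through `t ↦ (exp 2πi tⱼ)ⱼ`: `λ`, `z` and a point `x` of `𝕋_λ`
become `a`, `s` and `t`, the relations of `λ` become the characters `mFourier n` trivial at `a`, and
it suffices to show that `t - s` lies in the closed subgroup `H` generated by `a` (in a compact group
the closure of `ℕ • a` is already a subgroup). If some `w` killed by every character trivial on `H`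
were outside `H`, a Urysohn function vanishing on `H` and equal to `1` on `w + H` would have
different integrals against the Haar measure of `H` and its translate by `w`. But the two measures
give every character the same integral (a character nontrivial on `H` integrates to `0`), hence,
trigonometric polynomials being dense in `C(ℝᵈ / ℤᵈ, ℂ)`, every continuous function.
-/

open MeasureTheory Set

theorem integral_eq_zero_of_map_add_eq_mul {K : Type*} [AddGroup K] [MeasurableSpace K]
    [MeasurableAdd K] (μ : Measure K) [μ.IsAddLeftInvariant] {χ : K → ℂ}
    (hχ : ∀ a b, χ (a + b) = χ a * χ b) {a : K} (ha : χ a ≠ 1) : ∫ x, χ x ∂μ = 0 := by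
  have h := integral_add_left_eq_self χ a (μ := μ)
  simp only [hχ a, integral_const_mul] at h
  by_contra h0
  exact ha ((mul_eq_right₀ h0).1 h)

theorem integral_eq_of_dense_span {X : Type*} [TopologicalSpace X] [CompactSpace X]
    [MeasurableSpace X] [BorelSpace X] {μ ν : Measure X} [IsFiniteMeasure μ] [IsFiniteMeasure ν]
    {s : Set C(X, ℂ)} (hs : Dense (Submodule.span ℂ s : Set C(X, ℂ)))
    (h : ∀ f ∈ s, ∫ x, f x ∂μ = ∫ x, f x ∂ν) (f : C(X, ℂ)) : ∫ x, f x ∂μ = ∫ x, f x ∂ν := by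
  have hI : ∀ (ρ : Measure X) [IsFiniteMeasure ρ] (g : C(X, ℂ)),
      ∫ x, g x ∂ρ = (L1.integralCLM' ℂ).comp (ContinuousMap.toLp (E := ℂ) 1 ρ ℂ) g :=
    fun ρ _ g => by
      rw [ContinuousLinearMap.comp_apply, ← L1.integral_eq', L1.integral_eq_integral]
      exact integral_congr_ae (ContinuousMap.coeFn_toLp (p := 1) (𝕜 := ℂ) ρ g).symm
  simp only [hI] at h ⊢
  rw [ContinuousLinearMap.ext_on hs h]

theorem AddSubgroup.mem_of_forall_eq_one_of_dense_span {G ι : Type*} [AddGroup G]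
    [TopologicalSpace G] [IsTopologicalAddGroup G] [CompactSpace G] [T2Space G]
    (χ : ι → C(G, ℂ)) (hχ : ∀ i x y, χ i (x + y) = χ i x * χ i y)
    (hdense : Dense (Submodule.span ℂ (range χ) : Set C(G, ℂ)))
    {H : AddSubgroup G} (hH : IsClosed (H : Set G)) {w : G}
    (hw : ∀ i, (∀ h ∈ H, χ i h = 1) → χ i w = 1) : w ∈ H := by
  by_contra hwH
  borelize G
  have : CompactSpace H := isCompact_iff_compactSpace.1 hH.isCompact
  let ν : Measure H := Measure.addHaar
  let μ : Measure G := ν.map (↑)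
  let μw : Measure G := ν.map (w + ↑·)
  have hμ (f : C(G, ℂ)) : ∫ x, f x ∂μ = ∫ h : H, f h ∂ν :=
    integral_map (by fun_prop) (by fun_prop)
  have hμw (f : C(G, ℂ)) : ∫ x, f x ∂μw = ∫ h : H, f (w + h) ∂ν :=
    integral_map (by fun_prop) (by fun_prop)
  have hχ_int : ∀ i, ∫ x, χ i x ∂μw = ∫ x, χ i x ∂μ := by
    intro i
    simp only [hμ, hμw, hχ, integral_const_mul]
    by_cases hi : ∀ h ∈ H, χ i h = 1
    · rw [hw i hi, one_mul]
    · push Not at hi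
      obtain ⟨h, hh, hne⟩ := hi
      rw [integral_eq_zero_of_map_add_eq_mul ν (fun a b => hχ i a b) (a := ⟨h, hh⟩) hne, mul_zero]
  have hint := integral_eq_of_dense_span hdense (by rintro _ ⟨i, rfl⟩; exact hχ_int i)
  obtain ⟨f, hfH, hfwH, -⟩ := exists_continuous_zero_one_of_isClosed hH
    ((Homeomorph.addLeft w).isClosedMap _ hH) (Set.disjoint_left.2 fun x hx ⟨h, hh, hwh⟩ =>
      hwH (by simpa [← hwh] using H.sub_mem hx hh))
  have hf_int := hint ⟨fun x => (f x : ℂ), by fun_prop⟩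
  have hf₀ (h : H) : f h = 0 := hfH h.2
  have hf₁ (h : H) : f (w + h) = 1 := hfwH ⟨h, h.2, rfl⟩
  rw [hμ, hμw] at hf_int
  simp only [ContinuousMap.coe_mk, hf₀, hf₁, Complex.ofReal_one, Complex.ofReal_zero,
    integral_const, smul_zero, Complex.real_smul, mul_one, Complex.ofReal_eq_zero] at hf_int
  exact measureReal_univ_ne_zero hf_int

namespace UnitAddTorus

variable {ι : Type*}

noncomputable def toComplex (t : UnitAddTorus ι) : ι → ℂ := fun i => AddCircle.toCircle (t i)

theorem continuous_toComplex : Continuous (toComplex (ι := ι)) := by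
  unfold toComplex; fun_prop

theorem toComplex_add (x y : UnitAddTorus ι) : toComplex (x + y) = toComplex x * toComplex y := by
  ext i; simp [toComplex, AddCircle.toCircle_add]

theorem toComplex_nsmul (k : ℕ) (x : UnitAddTorus ι) : toComplex (k • x) = toComplex x ^ k := by
  ext i; simp [toComplex, AddCircle.toCircle_nsmul]

theorem exists_toComplex_eq {x : ι → ℂ} (hx : ∀ i, ‖x i‖ = 1) : ∃ t, toComplex t = x := by
  have (i : ι) : ∃ s : UnitAddCircle, (AddCircle.toCircle s : ℂ) = x i := by
    obtain ⟨s, hs⟩ := (AddCircle.homeomorphCircle one_ne_zero).surjective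
      ⟨x i, mem_sphere_zero_iff_norm.2 (hx i)⟩
    exact ⟨s, by rw [← AddCircle.homeomorphCircle_apply one_ne_zero, hs]⟩
  choose t ht using this
  exact ⟨t, funext ht⟩

variable [Fintype ι]

theorem mFourier_apply_eq_prod (n : ι → ℤ) (t : UnitAddTorus ι) :
    mFourier n t = ∏ i, toComplex t i ^ n i := by
  simp [mFourier, fourier_apply, AddCircle.toCircle_zsmul, toComplex]

theorem mFourier_apply_add (n : ι → ℤ) (x y : UnitAddTorus ι) :
    mFourier n (x + y) = mFourier n x * mFourier n y := by
  simp only [mFourier_apply_eq_prod, toComplex_add, Pi.mul_apply, mul_zpow, Finset.prod_mul_distrib]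

theorem mem_closure_range_nsmul_of_mFourier {a w : UnitAddTorus ι}
    (h : ∀ n, mFourier n a = 1 → mFourier n w = 1) : w ∈ closure (range fun k : ℕ => k • a) := by
  have hw : w ∈ (AddSubgroup.zmultiples a).topologicalClosure :=
    AddSubgroup.mem_of_forall_eq_one_of_dense_span mFourier mFourier_apply_add
      (Submodule.dense_iff_topologicalClosure_eq_top.2 span_mFourier_closure_eq_top)
      (AddSubgroup.isClosed_topologicalClosure _) fun n hn =>
        h n (hn a (AddSubgroup.le_topologicalClosure _ (AddSubgroup.mem_zmultiples a)))
  exact ((mapClusterPt_atTop_nsmul_tfae w a).out 0 2).1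
    (mapClusterPt_atTop_nsmul_iff_mem_topologicalClosure_zmultiples.2 hw)

end UnitAddTorus

open UnitAddTorus

/-- The orbit of any point of `𝕋_λ` under coordinatewise multiplication by `λ`
is dense in `𝕋_λ`. -/
theorem orbit_dense_in_Tset (d : ℕ) (l : Fin d → ℂ) (hl : ∀ i, ‖l i‖ = 1)
    (z : Fin d → ℂ) (hz : z ∈ Tset d l) :
    Tset d l ⊆ closure {x : Fin d → ℂ | ∃ n : ℕ, x = fun i => z i * l i ^ n} := by
  rintro x ⟨hx, hx_rel⟩
  obtain ⟨a, rfl⟩ := exists_toComplex_eq hl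
  obtain ⟨s, rfl⟩ := exists_toComplex_eq hz.1
  obtain ⟨t, rfl⟩ := exists_toComplex_eq hx
  have hrel (n : Fin d → ℤ) (hn : mFourier n a = 1) : mFourier n (t - s) = 1 := by
    rw [mFourier_apply_eq_prod] at hn
    have hs := hz.2 n hn
    have ht := hx_rel n hn
    rw [← mFourier_apply_eq_prod] at hs ht
    rwa [← sub_add_cancel t s, mFourier_apply_add, hs, mul_one] at ht
  have hmaps : MapsTo (fun y => toComplex (s + y)) (range fun k : ℕ => k • a)
      {x | ∃ n : ℕ, x = fun i => toComplex s i * toComplex a i ^ n} := by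
    rintro _ ⟨k, rfl⟩
    exact ⟨k, by simp only [toComplex_add, toComplex_nsmul]; rfl⟩
  simpa using map_mem_closure (continuous_toComplex.comp (continuous_const_add s))
    (mem_closure_range_nsmul_of_mFourier hrel) hmaps
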